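/- Let r be a positive integer, λ a real number, and x a real number. Let (B_{n,λ}^{(r)}(x))_{n≥0} be the higher-order degenerate Bernoulli polynomial values, determined by (Σ_{n≥0} B_{n,λ}^{(r)}(x) tⁿ/n!)·(exp(L_λ(t)) − 1)^r = L_λ(t)^r·exp(x·L_λ(t)) in ℝ[[t]], and let (B_n^{(r)}(x))_{n≥0} be the (non-degenerate) higher-order Bernoulli polynomial values, determined by (Σ_{n≥0} B_n^{(r)}(x) tⁿ/n!)·(exp(t) − 1)^r = t^r·exp(xt) in ℝ[[t]]. Then for every n ≥ 0, B_{n,λ}^{(r)}(x) = Σ_{l=0}^n s(n,l) λ^{n−l} B_l^{(r)}(x), where s(n,l) are the signed Stirling numbers of the first kind. -/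

import Mathlib

/-!
Substituting `L_λ` for `t` is a ring endomorphism of `ℝ⟦t⟧` sending `t ↦ L_λ`,
`eᵗ ↦ e^{L_λ}` and `e^{xt} ↦ e^{x L_λ}`. Applied to the defining identity of `B_n^{(r)}(x)`
it yields the defining identity of `B_{n,λ}^{(r)}(x)`, so (after cancelling the nonzero factor
`(e^{L_λ} - 1)^r`) the degenerate generating function is the ordinary one composed with `L_λ`.
Reading off coefficients, it remains to see `n! [tⁿ] L_λ^l = l! s(n,l) λ^{n-l}`, which follows by
induction on `n` from `(1 + λt) L_λ' = 1` and the recurrence `s(n+1,l+1) = s(n,l) - n s(n,l+1)`.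
-/

/-- `L_λ(t) = Σ_{k≥1} (-1)^(k-1) λ^(k-1) t^k / k`, the formal series of `(1/λ)log(1+λt)`. -/
noncomputable def Lser (lam : ℝ) : PowerSeries ℝ :=
  PowerSeries.mk fun k => if k = 0 then 0 else (-1) ^ (k - 1) * lam ^ (k - 1) / k

/-- The formal exponential `Σ_{m≥0} S^m/m!` of a power series `S` with zero constant term;
since `coeff n (S^m) = 0` for `m > n`, each coefficient is the finite sum below. -/
noncomputable def expPS (S : PowerSeries ℝ) : PowerSeries ℝ :=
  PowerSeries.mk fun n =>
    ∑ m ∈ Finset.range (n + 1), (PowerSeries.coeff n (S ^ m)) / m.factorial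

/-- The signed Stirling numbers of the first kind, defined as the coefficients of the
descending Pochhammer polynomial `X(X-1)⋯(X-n+1)`. -/
noncomputable def stirlingFirst (n l : ℕ) : ℤ := (descPochhammer ℤ n).coeff l

open PowerSeries Finset

namespace PowerSeries

variable {R : Type*} [CommRing R]

theorem coeff_pow_eq_zero_of_lt {f : R⟦X⟧} (hf : constantCoeff f = 0) {n d : ℕ} (h : n < d) :
    coeff n (f ^ d) = 0 := by
  obtain ⟨g, rfl⟩ := X_dvd_iff.2 hf
  rw [mul_pow, coeff_X_pow_mul', if_neg (by omega)]

theorem coeff_subst_eq_sum_range {f g : R⟦X⟧} (hg : constantCoeff g = 0) (n : ℕ) :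
    coeff n (f.subst g) = ∑ d ∈ range (n + 1), coeff d f * coeff n (g ^ d) := by
  rw [coeff_subst' (.of_constantCoeff_zero' hg)]
  refine finsum_eq_sum_of_support_subset _ fun d hd => ?_
  by_contra h
  rw [coe_range, Set.mem_Iio, not_lt] at h
  exact hd (by simp [coeff_pow_eq_zero_of_lt hg (Nat.lt_of_succ_le h)])

theorem coeff_X_mul_derivative (f : R⟦X⟧) (n : ℕ) :
    coeff n (X * d⁄dX R f) = n * coeff n f := by
  cases n with
  | zero => simp
  | succ n => rw [coeff_succ_X_mul, coeff_derivative]; push_cast; ring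

end PowerSeries

theorem expPS_eq_subst_exp {S : ℝ⟦X⟧} (hS : constantCoeff S = 0) :
    expPS S = (exp ℝ).subst S := by
  ext n
  rw [coeff_subst_eq_sum_range hS, expPS, coeff_mk]
  refine sum_congr rfl fun d _ => ?_
  simp [div_eq_inv_mul]

theorem expPS_C_mul_eq_subst {S : ℝ⟦X⟧} (hS : constantCoeff S = 0) (x : ℝ) :
    expPS (C x * S) = (mk fun n => x ^ n / n.factorial).subst S := by
  ext n
  rw [coeff_subst_eq_sum_range hS, expPS, coeff_mk]
  refine sum_congr rfl fun d _ => ?_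
  rw [coeff_mk, mul_pow, ← map_pow, coeff_C_mul]
  ring

theorem constantCoeff_Lser (lam : ℝ) : constantCoeff (Lser lam) = 0 := by
  simp [Lser]

theorem coeff_one_Lser (lam : ℝ) : coeff 1 (Lser lam) = 1 := by
  simp [Lser]

theorem expPS_Lser_sub_one_ne_zero (lam : ℝ) : expPS (Lser lam) - 1 ≠ 0 := by
  intro h
  have h1 := congrArg (coeff 1) h
  simp [expPS, sum_range_succ, coeff_one_Lser] at h1

theorem derivative_Lser (lam : ℝ) : d⁄dX ℝ (Lser lam) = mk fun n => (-lam) ^ n := by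
  ext n
  rw [coeff_derivative, Lser, coeff_mk, coeff_mk, if_neg n.succ_ne_zero, Nat.add_sub_cancel]
  field_simp
  push_cast
  ring

theorem one_add_C_mul_X_mul_derivative_Lser (lam : ℝ) :
    (1 + C lam * X) * d⁄dX ℝ (Lser lam) = 1 := by
  have h := congrArg (rescale (-lam)) (mk_one_mul_one_sub_eq_one ℝ)
  rw [map_mul, map_sub, map_one, rescale_X, rescale_mk] at h
  rw [derivative_Lser, mul_comm]
  convert h using 2
  · simp
  · simp [sub_eq_add_neg]

theorem coeff_Lser_pow_succ_recurrence (lam : ℝ) (n l : ℕ) :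
    (n + 1) * coeff (n + 1) (Lser lam ^ (l + 1)) + lam * n * coeff n (Lser lam ^ (l + 1))
      = (l + 1) * coeff n (Lser lam ^ l) := by
  have h : (1 + C lam * X) * d⁄dX ℝ (Lser lam ^ (l + 1)) =
      C ((l : ℝ) + 1) * Lser lam ^ l := by
    rw [derivative_pow, Nat.add_sub_cancel, map_add, map_one, map_natCast]
    push_cast
    linear_combination
      ((l + 1 : ℝ⟦X⟧) * Lser lam ^ l) * one_add_C_mul_X_mul_derivative_Lser lam
  have hn := congrArg (coeff n) h
  rw [add_mul, one_mul, mul_assoc, map_add, coeff_C_mul, coeff_X_mul_derivative,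
    coeff_derivative, coeff_C_mul] at hn
  linear_combination hn

theorem stirlingFirst_zero_left (l : ℕ) : stirlingFirst 0 l = if l = 0 then 1 else 0 := by
  simp [stirlingFirst, Polynomial.coeff_one]

theorem stirlingFirst_succ_zero (n : ℕ) : stirlingFirst (n + 1) 0 = 0 := by
  rw [stirlingFirst, Polynomial.coeff_zero_eq_eval_zero, descPochhammer_eval_zero,
    if_neg n.succ_ne_zero]

theorem stirlingFirst_succ_succ (n l : ℕ) :
    stirlingFirst (n + 1) (l + 1) = stirlingFirst n l - n * stirlingFirst n (l + 1) := by
  rw [stirlingFirst, descPochhammer_succ_right, ← Polynomial.C_eq_natCast,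
    Polynomial.coeff_mul_X_sub_C, stirlingFirst, stirlingFirst, mul_comm]

theorem stirlingFirst_eq_zero_of_lt {n l : ℕ} (h : n < l) : stirlingFirst n l = 0 :=
  Polynomial.coeff_eq_zero_of_natDegree_lt (by rwa [descPochhammer_natDegree])

open scoped Nat in
theorem factorial_mul_coeff_Lser_pow (lam : ℝ) (n l : ℕ) :
    n ! * coeff n (Lser lam ^ l) = stirlingFirst n l * lam ^ (n - l) * l ! := by
  induction n generalizing l with
  | zero =>
    cases l with
    | zero => simp [stirlingFirst_zero_left]
    | succ l => simp [coeff_pow_eq_zero_of_lt (constantCoeff_Lser lam) l.succ_pos,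
        stirlingFirst_zero_left]
  | succ n ih =>
    cases l with
    | zero => simp [stirlingFirst_succ_zero]
    | succ l =>
      have hpow : lam * (stirlingFirst n (l + 1) * lam ^ (n - (l + 1))) =
          stirlingFirst n (l + 1) * lam ^ (n - l) := by
        rcases lt_or_ge n (l + 1) with h | h
        · simp [stirlingFirst_eq_zero_of_lt h]
        · rw [show n - l = n - (l + 1) + 1 by omega, pow_succ]
          ring
      rw [stirlingFirst_succ_succ, Nat.succ_sub_succ, Nat.factorial_succ, Nat.factorial_succ]
      have ihl1 := ih (l + 1)
      rw [Nat.factorial_succ] at ihl1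
      push_cast at ihl1 ⊢
      linear_combination (n ! : ℝ) * coeff_Lser_pow_succ_recurrence lam n l
        + ((l : ℝ) + 1) * ih l - lam * n * ihl1 - n * ((l : ℝ) + 1) * l ! * hpow

theorem higher_degenerate_bernoulli_eq_sum_stirling_general (r : ℕ) (lam x : ℝ)
    (Bd B : ℕ → ℝ)
    (hBd : (PowerSeries.mk fun n => Bd n / n.factorial) * (expPS (Lser lam) - 1) ^ r =
      Lser lam ^ r * expPS (PowerSeries.C x * Lser lam))
    (hB : (PowerSeries.mk fun n => B n / n.factorial) * (PowerSeries.exp ℝ - 1) ^ r =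
      PowerSeries.X ^ r * PowerSeries.mk fun n => x ^ n / n.factorial) :
    ∀ n : ℕ, Bd n =
      ∑ l ∈ Finset.range (n + 1), (stirlingFirst n l : ℝ) * lam ^ (n - l) * B l := by
  have hL := constantCoeff_Lser lam
  have hsubst : (mk fun n => Bd n / n.factorial) =
      (mk fun n => B n / n.factorial).subst (Lser lam) := by
    have h := congrArg (substAlgHom (.of_constantCoeff_zero' hL)) hB
    simp only [map_mul, map_pow, map_sub, map_one, substAlgHom_X, coe_substAlgHom] at h
    rw [← expPS_eq_subst_exp hL, ← expPS_C_mul_eq_subst hL, ← hBd] at h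
    exact (mul_right_cancel₀ (pow_ne_zero r (expPS_Lser_sub_one_ne_zero lam)) h).symm
  intro n
  have hn := congrArg (coeff n) hsubst
  rw [coeff_mk, coeff_subst_eq_sum_range hL, div_eq_iff (by positivity), sum_mul] at hn
  rw [hn]
  refine sum_congr rfl fun l _ => ?_
  simp only [coeff_mk]
  field_simp
  linear_combination B l * factorial_mul_coeff_Lser_pow lam n l

theorem higher_degenerate_bernoulli_eq_sum_stirling (r : ℕ) (hr : 0 < r) (lam x : ℝ)
    (Bd B : ℕ → ℝ)
    (hBd : (PowerSeries.mk fun n => Bd n / n.factorial) * (expPS (Lser lam) - 1) ^ r =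
      Lser lam ^ r * expPS (PowerSeries.C x * Lser lam))
    (hB : (PowerSeries.mk fun n => B n / n.factorial) * (PowerSeries.exp ℝ - 1) ^ r =
      PowerSeries.X ^ r * PowerSeries.mk fun n => x ^ n / n.factorial) :
    ∀ n : ℕ, Bd n =
      ∑ l ∈ Finset.range (n + 1), (stirlingFirst n l : ℝ) * lam ^ (n - l) * B l :=
  higher_degenerate_bernoulli_eq_sum_stirling_general r lam x Bd B hBd hB
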